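/- arXiv:math/0609653 — 7 statements merged into one kernel-verified Lean document; each statement's English description precedes it below -/
import Mathlib

section
/- Let b be a finite Blaschke product of degree κ with zeros in the open unit disk, and let t_0 be a point on the unit circle. Then the (unrestricted) limit of (1 - |b(z)|²)/(1 - |z|²) as z → t_0 with z in the open unit disk exists, is finite, and is strictly positive. -/
/-!
Writing `K_f(z) = (1 - ‖f z‖²) / (1 - ‖z‖²)`, the identity `1 - |fg|² = (1 - |f|²) + |f|² (1 - |g|²)`
gives `K_{fg} = K_f + |f|² K_g`. For a single Blaschke factor `φ_w` one has
`K_{φ_w}(z) = (1 - |w|²) / |1 - z w̄|²` on the disk, which extends continuously to the closed disk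
with a positive value. Induction on the number of factors then gives a positive limit at `t₀`.
-/

open Filter Topology ComplexConjugate Finset

section SchurKernel

variable {E 𝕜 : Type*} [Norm E] [NormedField 𝕜]

noncomputable def schurKernel (f : E → 𝕜) (z : E) : ℝ :=
  (1 - ‖f z‖ ^ 2) / (1 - ‖z‖ ^ 2)

theorem schurKernel_mul (f g : E → 𝕜) (z : E) :
    schurKernel (f * g) z = schurKernel f z + ‖f z‖ ^ 2 * schurKernel g z := by
  simp only [schurKernel, Pi.mul_apply, norm_mul, mul_pow]
  ring

theorem exists_pos_tendsto_schurKernel_prod {ι : Type*} {l : Filter E} {f : ι → E → 𝕜}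
    {s : Finset ι} (hs : s.Nonempty) (hf : ∀ i ∈ s, ∃ v, Tendsto (f i) l (𝓝 v))
    (hK : ∀ i ∈ s, ∃ L > 0, Tendsto (schurKernel (f i)) l (𝓝 L)) :
    ∃ L > 0, Tendsto (schurKernel (∏ i ∈ s, f i)) l (𝓝 L) := by
  induction hs using Finset.Nonempty.cons_induction with
  | singleton a => simpa using hK a (mem_singleton_self a)
  | cons a s ha hs ih =>
    obtain ⟨v, hv⟩ := hf a (mem_cons_self a s)
    obtain ⟨La, hLa, hKa⟩ := hK a (mem_cons_self a s)
    obtain ⟨Ls, hLs, hKs⟩ :=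
      ih (fun i hi => hf i (mem_cons_of_mem hi)) (fun i hi => hK i (mem_cons_of_mem hi))
    refine ⟨La + ‖v‖ ^ 2 * Ls, by positivity, ?_⟩
    rw [prod_cons, funext (schurKernel_mul _ _)]
    exact hKa.add ((hv.norm.pow 2).mul hKs)

end SchurKernel

noncomputable def blaschkeFactor (w z : ℂ) : ℂ :=
  (z - w) / (1 - z * conj w)

theorem one_sub_mul_conj_ne_zero {z w : ℂ} (hz : ‖z‖ ≤ 1) (hw : ‖w‖ < 1) :
    1 - z * conj w ≠ 0 := by
  intro h
  have h1 : ‖z * conj w‖ = 1 := by rw [← sub_eq_zero.mp h, norm_one]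
  rw [norm_mul, Complex.norm_conj] at h1
  nlinarith [norm_nonneg z, norm_nonneg w]

theorem norm_one_sub_mul_conj_sq_sub_norm_sub_sq (z w : ℂ) :
    ‖1 - z * conj w‖ ^ 2 - ‖z - w‖ ^ 2 = (1 - ‖z‖ ^ 2) * (1 - ‖w‖ ^ 2) := by
  simp only [← Complex.normSq_eq_norm_sq, Complex.normSq_apply, Complex.sub_re, Complex.sub_im,
    Complex.mul_re, Complex.mul_im, Complex.conj_re, Complex.conj_im, Complex.one_re,
    Complex.one_im]
  ring

theorem schurKernel_blaschkeFactor {z w : ℂ} (hz : ‖z‖ < 1) (hw : ‖w‖ < 1) :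
    schurKernel (blaschkeFactor w) z = (1 - ‖w‖ ^ 2) / ‖1 - z * conj w‖ ^ 2 := by
  have hden : ‖1 - z * conj w‖ ≠ 0 := norm_ne_zero_iff.mpr (one_sub_mul_conj_ne_zero hz.le hw)
  have hz' : 1 - ‖z‖ ^ 2 ≠ 0 := by nlinarith [norm_nonneg z]
  rw [schurKernel, blaschkeFactor, norm_div, div_pow, div_eq_div_iff hz' (pow_ne_zero 2 hden)]
  field_simp
  linear_combination norm_one_sub_mul_conj_sq_sub_norm_sub_sq z w

theorem continuousAt_blaschkeFactor {z w : ℂ} (hz : ‖z‖ ≤ 1) (hw : ‖w‖ < 1) :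
    ContinuousAt (blaschkeFactor w) z :=
  (continuousAt_id.sub continuousAt_const).div
    (continuousAt_const.sub (continuousAt_id.mul continuousAt_const))
    (one_sub_mul_conj_ne_zero hz hw)

theorem tendsto_schurKernel_blaschkeFactor {t w : ℂ} (ht : ‖t‖ ≤ 1) (hw : ‖w‖ < 1) :
    Tendsto (schurKernel (blaschkeFactor w)) (𝓝[Metric.ball 0 1] t)
      (𝓝 ((1 - ‖w‖ ^ 2) / ‖1 - t * conj w‖ ^ 2)) := by
  have hcont : ContinuousAt (fun z : ℂ => (1 - ‖w‖ ^ 2) / ‖1 - z * conj w‖ ^ 2) t :=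
    continuousAt_const.div
      ((continuousAt_const.sub (continuousAt_id.mul continuousAt_const)).norm.pow 2)
      (pow_ne_zero 2 (norm_ne_zero_iff.mpr (one_sub_mul_conj_ne_zero ht hw)))
  refine (hcont.tendsto.mono_left nhdsWithin_le_nhds).congr' ?_
  filter_upwards [self_mem_nhdsWithin] with z hz
  exact (schurKernel_blaschkeFactor (mem_ball_zero_iff.mp hz) hw).symm

theorem stmt_1 (κ : ℕ) (hκ : 1 ≤ κ) (c : Fin κ → ℂ) (hc : ∀ j, ‖c j‖ < 1)
    (t₀ : ℂ) (ht : ‖t₀‖ = 1) :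
    ∃ L : ℝ, 0 < L ∧ Filter.Tendsto
      (fun z : ℂ => (1 - ‖∏ j, (z - c j) / (1 - z * (starRingEnd ℂ) (c j))‖ ^ 2) /
        (1 - ‖z‖ ^ 2))
      (nhdsWithin t₀ (Metric.ball 0 1)) (nhds L) := by
  have hne : (univ : Finset (Fin κ)).Nonempty := univ_nonempty_iff.mpr ⟨⟨0, hκ⟩⟩
  have hpos : ∀ j, 0 < (1 - ‖c j‖ ^ 2) / ‖1 - t₀ * conj (c j)‖ ^ 2 := fun j => by
    have hden := one_sub_mul_conj_ne_zero ht.le (hc j)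
    have hcj : ‖c j‖ ^ 2 < 1 := by nlinarith [norm_nonneg (c j), hc j]
    have hnum : 0 < 1 - ‖c j‖ ^ 2 := by linarith
    positivity
  obtain ⟨L, hL, hlim⟩ := exists_pos_tendsto_schurKernel_prod hne
    (f := fun j => blaschkeFactor (c j))
    (fun j _ => ⟨_, (continuousAt_blaschkeFactor ht.le (hc j)).tendsto.mono_left
      nhdsWithin_le_nhds⟩)
    (fun j _ => ⟨_, hpos j, tendsto_schurKernel_blaschkeFactor ht.le (hc j)⟩)
  refine ⟨L, hL, ?_⟩
  convert hlim using 2 with z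
  simp only [schurKernel, prod_apply, blaschkeFactor]
end

section
/- For any n distinct points ζ_1, ..., ζ_n in the open unit disk, the n×n Gram matrix G with entries G_{kj} = 1/(1 - ζ_j·conj(ζ_k)) is positive definite. -/
/-!
Expanding `1 / (1 - ζ_j * conj ζ_k)` as a geometric series exhibits `G` as the Gram matrix of the
sequences `(ζ_k ^ m)_m` in `ℓ²(ℕ)`. For distinct `ζ_k` these sequences are linearly independent
(Dedekind's independence of the characters `m ↦ ζ ^ m` of `ℕ`), and the Gram matrix of linearly
independent vectors is positive definite.
-/

open scoped ComplexOrder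
open scoped ComplexConjugate InnerProductSpace

theorem linearIndependent_geometric {ι K : Type*} [CommRing K] [IsDomain K] {z : ι → K}
    (hz : Function.Injective z) : LinearIndependent K fun i (m : ℕ) => z i ^ m :=
  (linearIndependent_monoidHom (Multiplicative ℕ) K).comp (fun i => powersHom K (z i))
    ((powersHom K).injective.comp hz)

section

variable {𝕜 : Type*} [RCLike 𝕜]

def lp.coeFnLinearMap {α : Type*} (E : α → Type*) [∀ i, NormedAddCommGroup (E i)]
    [∀ i, NormedSpace 𝕜 (E i)] (p : ENNReal) : lp E p →ₗ[𝕜] ∀ i, E i where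
  toFun := (⇑)
  map_add' := lp.coeFn_add
  map_smul' := lp.coeFn_smul

theorem memℓp_two_geometric {z : 𝕜} (hz : ‖z‖ < 1) : Memℓp (fun m : ℕ => z ^ m) 2 := by
  refine memℓp_gen ?_
  have hz2 : ‖z‖ ^ 2 < 1 := pow_lt_one₀ (norm_nonneg z) hz two_ne_zero
  convert summable_geometric_of_lt_one (by positivity) hz2 using 2 with m
  simp only [ENNReal.toReal_ofNat, Real.rpow_two, norm_pow, ← pow_mul, mul_comm]

/-- Under `H²(𝔻) ≅ ℓ²(ℕ)` this is the Szegő kernel at `conj z`: Mathlib's inner product is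
conjugate-linear in its first argument, so `⟪k_a, k_b⟫` for the kernels themselves would give the
transposed matrix. -/
def geometricL2 (z : 𝕜) (hz : ‖z‖ < 1) : lp (fun _ : ℕ => 𝕜) 2 := ⟨_, memℓp_two_geometric hz⟩

theorem inner_geometricL2 {z w : 𝕜} (hz : ‖z‖ < 1) (hw : ‖w‖ < 1) :
    ⟪geometricL2 z hz, geometricL2 w hw⟫_𝕜 = 1 / (1 - w * conj z) := by
  have hwz : ‖w * conj z‖ < 1 := by
    rw [norm_mul, RCLike.norm_conj]
    nlinarith [norm_nonneg z, norm_nonneg w]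
  rw [lp.inner_eq_tsum, one_div, ← tsum_geometric_of_norm_lt_one hwz]
  simp [geometricL2, mul_pow]

theorem linearIndependent_geometricL2 {ι : Type*} {z : ι → 𝕜} (hz : ∀ i, ‖z i‖ < 1)
    (hinj : Function.Injective z) : LinearIndependent 𝕜 fun i => geometricL2 (z i) (hz i) :=
  .of_comp (lp.coeFnLinearMap _ 2) (linearIndependent_geometric hinj)

end

theorem stmt_2 (n : ℕ) (ζ : Fin n → ℂ) (hζ : ∀ k, ‖ζ k‖ < 1)
    (hinj : Function.Injective ζ) :
    (Matrix.of fun k j : Fin n => 1 / (1 - ζ j * (starRingEnd ℂ) (ζ k))).PosDef := by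
  have hgram : (Matrix.of fun k j : Fin n => 1 / (1 - ζ j * (starRingEnd ℂ) (ζ k))) =
      Matrix.gram ℂ fun k => geometricL2 (ζ k) (hζ k) := by
    ext k j
    rw [Matrix.gram_apply, inner_geometricL2, Matrix.of_apply]
  rw [hgram]
  exact Matrix.posDef_gram_of_linearIndependent (linearIndependent_geometricL2 hζ hinj)
end

section
/- Let P be an invertible Hermitian n×n matrix, X a real diagonal matrix with distinct diagonal entries x_1,...,x_n, and E, C complex 1×n row vectors with real entries, satisfying PX - XP = E*C - C*E. Set Ẽ = EP⁻¹ and C̃ = CP⁻¹ with entries ẽ_i, c̃_i, and let p̃_{ij} denote the entries of P⁻¹. Then XP⁻¹ - P⁻¹X = Ẽ*C̃ - C̃*Ẽ, and consequently for i ≠ j, p̃_{ij} = (ẽ_i·c̃_j - c̃_i·ẽ_j)/(x_i - x_j). -/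
open Matrix Finset

theorem stmt_10 (n : ℕ) (P : Matrix (Fin n) (Fin n) ℂ) (hP : P.IsHermitian)
    (hPu : IsUnit P) (x : Fin n → ℝ) (hx : Function.Injective x)
    (E C : Fin n → ℂ) (hE : ∀ i, (E i).im = 0) (hC : ∀ i, (C i).im = 0)
    (hLyap : P * Matrix.diagonal (fun i => (x i : ℂ)) -
        Matrix.diagonal (fun i => (x i : ℂ)) * P =
      Matrix.of fun i j => star (E i) * C j - star (C i) * E j) :
    (Matrix.diagonal (fun i => (x i : ℂ)) * P⁻¹ -
        P⁻¹ * Matrix.diagonal (fun i => (x i : ℂ)) =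
      Matrix.of fun i j => star (Matrix.vecMul E P⁻¹ i) * Matrix.vecMul C P⁻¹ j -
        star (Matrix.vecMul C P⁻¹ i) * Matrix.vecMul E P⁻¹ j) ∧
    ∀ i j, i ≠ j → P⁻¹ i j =
      (Matrix.vecMul E P⁻¹ i * Matrix.vecMul C P⁻¹ j -
        Matrix.vecMul C P⁻¹ i * Matrix.vecMul E P⁻¹ j) / ((x i : ℂ) - (x j : ℂ)) := by
  have hEs : ∀ i, star (E i) = E i := fun i => Complex.conj_eq_iff_im.mpr (hE i)
  have hCs : ∀ i, star (C i) = C i := fun i => Complex.conj_eq_iff_im.mpr (hC i)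
  have hEs2 : ∀ i, (starRingEnd ℂ) (E i) = E i := hEs
  have hCs2 : ∀ i, (starRingEnd ℂ) (C i) = C i := hCs
  have hdet : IsUnit P.det := (Matrix.isUnit_iff_isUnit_det P).mp hPu
  have h1 : P⁻¹ * P = 1 := Matrix.nonsing_inv_mul P hdet
  have h2 : P * P⁻¹ = 1 := Matrix.mul_nonsing_inv P hdet
  set X : Matrix (Fin n) (Fin n) ℂ := Matrix.diagonal (fun i => (x i : ℂ)) with hX
  have hPher : ∀ i j, star (P j i) = P i j := fun i j => congrFun (congrFun hP i) j
  have hPre : ∀ i j, (P i j).im = 0 := by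
    intro i j
    rcases eq_or_ne i j with rfl | hij
    · exact Complex.conj_eq_iff_im.mp (hPher i i)
    · have h3 := congrFun (congrFun hLyap i) j
      have hxij : x i ≠ x j := fun h => hij (hx h)
      simp [X, Matrix.sub_apply, Matrix.mul_diagonal, Matrix.diagonal_mul] at h3
      have him : (P i j * (x j : ℂ) - (x i : ℂ) * P i j).im = 0 := by
        rw [h3]
        simp [Complex.sub_im, Complex.mul_im, Complex.conj_im, Complex.conj_re, hE, hC]
      have hm : (P i j).im * (x j - x i) = 0 := by
        simpa [Complex.sub_im, Complex.mul_im, Complex.ofReal_im, Complex.ofReal_re,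
          mul_comm, sub_mul, mul_sub] using him
      rcases mul_eq_zero.mp hm with h | h
      · exact h
      · exact absurd (sub_eq_zero.mp h).symm hxij
  have hPsym : Pᵀ = P := by
    ext i j
    rw [Matrix.transpose_apply, ← hPher j i]
    exact Complex.conj_eq_iff_im.mpr (hPre i j)
  have hinvH : (P⁻¹).IsHermitian := hP.inv
  have hinvHer : ∀ i j, star (P⁻¹ j i) = P⁻¹ i j := fun i j => congrFun (congrFun hinvH i) j
  have hinvsym : ∀ i j, P⁻¹ j i = P⁻¹ i j := by
    intro i j
    have h : (P⁻¹)ᵀ = P⁻¹ := by rw [Matrix.transpose_nonsing_inv, hPsym]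
    exact congrFun (congrFun h i) j
  have hinvre : ∀ i j, star (P⁻¹ i j) = P⁻¹ i j :=
    fun i j => (hinvHer j i).trans (hinvsym i j)
  have hinvre2 : ∀ i j, (starRingEnd ℂ) (P⁻¹ i j) = P⁻¹ i j := hinvre
  have hEt : ∀ i, star (Matrix.vecMul E P⁻¹ i) = Matrix.vecMul E P⁻¹ i := by
    intro i
    simp only [Matrix.vecMul, dotProduct, star_sum, star_mul', hEs, hinvre]
  have hCt : ∀ i, star (Matrix.vecMul C P⁻¹ i) = Matrix.vecMul C P⁻¹ i := by
    intro i
    simp only [Matrix.vecMul, dotProduct, star_sum, star_mul', hCs, hinvre]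
  have hEt2 : ∀ i, (starRingEnd ℂ) (Matrix.vecMul E P⁻¹ i) = Matrix.vecMul E P⁻¹ i := hEt
  have hCt2 : ∀ i, (starRingEnd ℂ) (Matrix.vecMul C P⁻¹ i) = Matrix.vecMul C P⁻¹ i := hCt
  have key : X * P⁻¹ - P⁻¹ * X = P⁻¹ * (P * X - X * P) * P⁻¹ := by
    rw [Matrix.mul_sub, Matrix.sub_mul, ← Matrix.mul_assoc, ← Matrix.mul_assoc, h1,
      Matrix.one_mul, Matrix.mul_assoc, h2, Matrix.mul_one]
  rw [hLyap] at key
  have entry : ∀ i j, (P⁻¹ * (Matrix.of fun i j => star (E i) * C j - star (C i) * E j) * P⁻¹) i j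
      = Matrix.vecMul E P⁻¹ i * Matrix.vecMul C P⁻¹ j -
        Matrix.vecMul C P⁻¹ i * Matrix.vecMul E P⁻¹ j := by
    intro i j
    simp only [Matrix.mul_apply, Matrix.of_apply]
    have step1 : ∀ l, (∑ k, P⁻¹ i k * (star (E k) * C l - star (C k) * E l))
        = Matrix.vecMul E P⁻¹ i * C l - Matrix.vecMul C P⁻¹ i * E l := by
      intro l
      simp only [hEs, hCs, hEs2, hCs2, Matrix.vecMul, dotProduct]
      rw [Finset.sum_mul, Finset.sum_mul, ← Finset.sum_sub_distrib]
      refine Finset.sum_congr rfl fun k _ => ?_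
      rw [hinvsym i k]; ring
    simp only [step1, sub_mul, Finset.sum_sub_distrib, mul_assoc, ← Finset.mul_sum]
    simp only [Matrix.vecMul, dotProduct]
  constructor
  · ext i j
    have h4 := congrFun (congrFun key i) j
    rw [entry i j] at h4
    rw [h4]
    simp [hEt, hCt, hEt2, hCt2]
  · intro i j hij
    have h3 := congrFun (congrFun key i) j
    rw [entry i j] at h3
    simp only [X, Matrix.sub_apply, Matrix.diagonal_mul, Matrix.mul_diagonal] at h3
    have hxij : (x i : ℂ) - (x j : ℂ) ≠ 0 := by
      rw [sub_ne_zero]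
      exact fun h => hij (hx (by exact_mod_cast h))
    rw [eq_div_iff hxij]
    linear_combination h3
end

section
/- Under the hypotheses of the transformed Lyapunov identity XP⁻¹ - P⁻¹X = Ẽ*C̃ - C̃*Ẽ (with P invertible Hermitian, X real diagonal with distinct entries, Ẽ = EP⁻¹, C̃ = CP⁻¹), if additionally every entry of E is either 0 or 1 and whenever e_i = 0 the corresponding entry c_i of C is nonzero, then for each index i, |ẽ_i| + |c̃_i| > 0, i.e., ẽ_i and c̃_i cannot both vanish. -/
/-!
Let `w` be the `i`-th column of `P⁻¹`, so that `ẽ_i = E ⬝ᵥ w`, `c̃_i = C ⬝ᵥ w` and `P w = e_i`.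
If both vanish, the rank-two right-hand side of the Lyapunov identity kills `w`, hence
`P X w = X P w = x_i P w`, i.e. `w` is an eigenvector of `X` for `x_i`. As the `x_j` are
distinct, `w = c e_i` with `c ≠ 0`, and then `E i * c = C i * c = 0` forces `E i = C i = 0`.
-/

open Matrix

namespace Matrix

variable {n K : Type*} [Fintype n]

theorem of_star_mul_sub_star_mul_mulVec [CommRing K] [StarRing K] (E C w : n → K) :
    (of fun i j => star (E i) * C j - star (C i) * E j) *ᵥ w =
      (C ⬝ᵥ w) • star E - (E ⬝ᵥ w) • star C := by
  ext i
  simp only [mulVec, dotProduct, of_apply, sub_mul, Finset.sum_sub_distrib, Pi.sub_apply,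
    Pi.smul_apply, smul_eq_mul, Finset.sum_mul, Pi.star_apply, mul_assoc, mul_comm (star _)]

variable [DecidableEq n]

theorem eq_single_of_diagonal_mulVec_eq_smul [CommRing K] [NoZeroDivisors K] {d : n → K}
    (hd : Function.Injective d) {v : n → K} {i : n} (h : diagonal d *ᵥ v = d i • v) :
    v = Pi.single i (v i) := by
  ext j
  rcases eq_or_ne j i with rfl | hji
  · simp
  · have hj : (d j - d i) * v j = 0 := by
      have := congrFun h j
      rw [mulVec_diagonal, Pi.smul_apply, smul_eq_mul] at this
      rw [sub_mul, this, sub_self]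
    rw [Pi.single_eq_of_ne hji]
    exact (mul_eq_zero.mp hj).resolve_left (sub_ne_zero.mpr (hd.ne hji))

theorem mulVec_col_inv [CommRing K] {P : Matrix n n K} (hP : IsUnit P) (i : n) :
    P *ᵥ P⁻¹.col i = Pi.single i 1 := by
  rw [← mulVec_single_one, mulVec_mulVec, mul_nonsing_inv P ((isUnit_iff_isUnit_det P).mp hP),
    one_mulVec]

theorem exists_col_inv_eq_single [Field K] {P : Matrix n n K} (hP : IsUnit P) {d : n → K}
    (hd : Function.Injective d) {i : n}
    (h : (P * diagonal d - diagonal d * P) *ᵥ P⁻¹.col i = 0) :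
    ∃ c ≠ 0, P⁻¹.col i = Pi.single i c := by
  have heigen : diagonal d *ᵥ P⁻¹.col i = d i • P⁻¹.col i := by
    apply mulVec_injective_iff_isUnit.mpr hP
    rw [sub_mulVec, sub_eq_zero, ← mulVec_mulVec, ← mulVec_mulVec, mulVec_col_inv hP,
      diagonal_mulVec_single, mul_one] at h
    rw [h, mulVec_smul, mulVec_col_inv hP, ← Pi.single_smul', smul_eq_mul, mul_one]
  refine ⟨P⁻¹ i i, fun hzero => ?_, eq_single_of_diagonal_mulVec_eq_smul hd heigen⟩
  have hcol := mulVec_col_inv hP i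
  rw [eq_single_of_diagonal_mulVec_eq_smul hd heigen, col_apply, hzero, Pi.single_zero,
    mulVec_zero] at hcol
  simpa using congrFun hcol i

end Matrix

theorem stmt_11_general (n : ℕ) (P : Matrix (Fin n) (Fin n) ℂ)
    (hPu : IsUnit P) (x : Fin n → ℝ) (hx : Function.Injective x)
    (E C : Fin n → ℂ)
    (hEC : ∀ i, E i = 0 → C i ≠ 0)
    (hLyap : P * Matrix.diagonal (fun i => (x i : ℂ)) -
        Matrix.diagonal (fun i => (x i : ℂ)) * P =
      Matrix.of fun i j => star (E i) * C j - star (C i) * E j) :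
    ∀ i, 0 < ‖Matrix.vecMul E P⁻¹ i‖ + ‖Matrix.vecMul C P⁻¹ i‖ := by
  intro i
  have key : (E ᵥ* P⁻¹) i ≠ 0 ∨ (C ᵥ* P⁻¹) i ≠ 0 := by
    by_contra! h
    obtain ⟨hE, hC⟩ : E ⬝ᵥ P⁻¹.col i = 0 ∧ C ⬝ᵥ P⁻¹.col i = 0 := h
    have hcomm : (P * diagonal (fun i => (x i : ℂ)) - diagonal (fun i => (x i : ℂ)) * P) *ᵥ
        P⁻¹.col i = 0 := by
      rw [hLyap, of_star_mul_sub_star_mul_mulVec, hE, hC, zero_smul, zero_smul, sub_zero]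
    obtain ⟨c, hc, hcol⟩ := exists_col_inv_eq_single hPu (Complex.ofReal_injective.comp hx) hcomm
    rw [hcol, dotProduct_single] at hE hC
    exact hEC i ((mul_eq_zero.mp hE).resolve_right hc) ((mul_eq_zero.mp hC).resolve_right hc)
  rcases key with h | h
  · exact add_pos_of_pos_of_nonneg (norm_pos_iff.mpr h) (norm_nonneg _)
  · exact add_pos_of_nonneg_of_pos (norm_nonneg _) (norm_pos_iff.mpr h)

theorem stmt_11 (n : ℕ) (P : Matrix (Fin n) (Fin n) ℂ) (hP : P.IsHermitian)
    (hPu : IsUnit P) (x : Fin n → ℝ) (hx : Function.Injective x)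
    (E C : Fin n → ℂ) (hE01 : ∀ i, E i = 0 ∨ E i = 1)
    (hEC : ∀ i, E i = 0 → C i ≠ 0)
    (hLyap : P * Matrix.diagonal (fun i => (x i : ℂ)) -
        Matrix.diagonal (fun i => (x i : ℂ)) * P =
      Matrix.of fun i j => star (E i) * C j - star (C i) * E j) :
    ∀ i, 0 < ‖Matrix.vecMul E P⁻¹ i‖ + ‖Matrix.vecMul C P⁻¹ i‖ :=
  stmt_11_general n P hPu x hx E C hEC hLyap
end

section
/- Let P be an invertible Hermitian n×n matrix, X = diag(x_1,...,x_n) with distinct real entries, E, C ∈ ℂ¹ˣⁿ satisfying PX - XP = E*C - C*E, and J = [[0, -i],[i, 0]]. Define the 2×2 matrix function Θ(z) = I₂ - i·[C; E]·(zI - X)⁻¹·P⁻¹·[C* E*]·J. Then for all z, ζ not in {x_1,...,x_n}: J - Θ(z)·J·Θ(ζ)* = -i(z - conj(ζ))·[C; E]·(zI - X)⁻¹·P⁻¹·(conj(ζ)I - X)⁻¹·[C* E*]. -/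
open Matrix

theorem stmt_12 (n : ℕ) (P : Matrix (Fin n) (Fin n) ℂ) (hP : P.IsHermitian)
    (hPu : IsUnit P) (x : Fin n → ℝ) (hx : Function.Injective x)
    (E C : Fin n → ℂ)
    (hLyap : P * Matrix.diagonal (fun i => (x i : ℂ)) -
        Matrix.diagonal (fun i => (x i : ℂ)) * P =
      Matrix.of fun i j => star (E i) * C j - star (C i) * E j)
    (z ζ : ℂ) (hz : ∀ i, z ≠ (x i : ℂ)) (hζ : ∀ i, ζ ≠ (x i : ℂ)) :
    let X : Matrix (Fin n) (Fin n) ℂ := Matrix.diagonal fun i => (x i : ℂ)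
    let CE : Matrix (Fin 2) (Fin n) ℂ := Matrix.of fun p i => if p = 0 then C i else E i
    let J : Matrix (Fin 2) (Fin 2) ℂ := !![0, -Complex.I; Complex.I, 0]
    let Θ : ℂ → Matrix (Fin 2) (Fin 2) ℂ := fun u =>
      1 - Complex.I • (CE * (u • (1 : Matrix (Fin n) (Fin n) ℂ) - X)⁻¹ * P⁻¹ * CEᴴ * J)
    J - Θ z * J * (Θ ζ)ᴴ =
      (-Complex.I * (z - (starRingEnd ℂ) ζ)) •
        (CE * (z • (1 : Matrix (Fin n) (Fin n) ℂ) - X)⁻¹ * P⁻¹ *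
          ((starRingEnd ℂ) ζ • (1 : Matrix (Fin n) (Fin n) ℂ) - X)⁻¹ * CEᴴ) := by
  intro X CE J Θ
  classical
  -- notation
  set Za : Matrix (Fin n) (Fin n) ℂ := z • (1 : Matrix (Fin n) (Fin n) ℂ) - X with hZadef
  set Zc : Matrix (Fin n) (Fin n) ℂ := ζ • (1 : Matrix (Fin n) (Fin n) ℂ) - X with hZcdef
  set Zb : Matrix (Fin n) (Fin n) ℂ :=
    (starRingEnd ℂ ζ) • (1 : Matrix (Fin n) (Fin n) ℂ) - X with hZbdef
  -- diagonal forms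
  have hZad : Za = Matrix.diagonal (fun i => z - (x i : ℂ)) := by
    rw [hZadef, Matrix.smul_one_eq_diagonal]
    show _ - Matrix.diagonal _ = _
    rw [Matrix.diagonal_sub]
  have hZbd : Zb = Matrix.diagonal (fun i => (starRingEnd ℂ) ζ - (x i : ℂ)) := by
    rw [hZbdef, Matrix.smul_one_eq_diagonal]
    show _ - Matrix.diagonal _ = _
    rw [Matrix.diagonal_sub]
  have hζ' : ∀ i, (starRingEnd ℂ) ζ ≠ (x i : ℂ) := by
    intro i h
    apply hζ i
    have := congrArg (starRingEnd ℂ) h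
    simpa [Complex.conj_ofReal] using this
  -- invertibility
  have hZau : IsUnit Za.det := by
    rw [hZad, Matrix.det_diagonal]
    rw [isUnit_iff_ne_zero, Finset.prod_ne_zero_iff]
    intro i _
    exact sub_ne_zero.mpr (hz i)
  have hZbu : IsUnit Zb.det := by
    rw [hZbd, Matrix.det_diagonal]
    rw [isUnit_iff_ne_zero, Finset.prod_ne_zero_iff]
    intro i _
    exact sub_ne_zero.mpr (hζ' i)
  have hA1 : Za * Za⁻¹ = 1 := Matrix.mul_nonsing_inv _ hZau
  have hA2 : Za⁻¹ * Za = 1 := Matrix.nonsing_inv_mul _ hZau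
  have hB1 : Zb * Zb⁻¹ = 1 := Matrix.mul_nonsing_inv _ hZbu
  have hB2 : Zb⁻¹ * Zb = 1 := Matrix.nonsing_inv_mul _ hZbu
  have hPd : IsUnit P.det := (Matrix.isUnit_iff_isUnit_det P).mp hPu
  have hP1 : P * P⁻¹ = 1 := Matrix.mul_nonsing_inv _ hPd
  have hP2 : P⁻¹ * P = 1 := Matrix.nonsing_inv_mul _ hPd
  -- hermitian facts
  have hJdef : J = !![0, -Complex.I; Complex.I, 0] := rfl
  have hXdef : X = Matrix.diagonal fun i => (x i : ℂ) := rfl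
  have hCEdef : CE = Matrix.of fun p i => if p = 0 then C i else E i := rfl
  have hXH : Xᴴ = X := by
    rw [hXdef, Matrix.diagonal_conjTranspose]
    ext i j
    by_cases h : i = j <;>
      simp [Matrix.diagonal_apply, h, Pi.star_apply, Complex.star_def, Complex.conj_ofReal]
  have hPinvH : (P⁻¹)ᴴ = P⁻¹ := by
    rw [Matrix.conjTranspose_nonsing_inv, hP.eq]
  have hZcH : (Zc⁻¹)ᴴ = Zb⁻¹ := by
    rw [Matrix.conjTranspose_nonsing_inv]
    congr 1
    rw [hZcdef, hZbdef, Matrix.conjTranspose_sub, Matrix.conjTranspose_smul,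
      Matrix.conjTranspose_one, hXH, Complex.star_def]
  have hJH : Jᴴ = J := by
    rw [hJdef]
    ext i j
    fin_cases i <;> fin_cases j <;>
      simp [Matrix.conjTranspose_apply, Complex.star_def]
  have hJJ : J * J = 1 := by
    rw [hJdef]
    ext i j
    fin_cases i <;> fin_cases j <;>
      simp [Matrix.mul_apply, Fin.sum_univ_two, Matrix.one_apply, Complex.I_mul_I]
  -- key Lyapunov consequence
  have hKey : CEᴴ * J * CE = Complex.I • (P * X - X * P) := by
    rw [show P * X - X * P = Matrix.of fun i j => star (E i) * C j - star (C i) * E j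
      from hLyap]
    ext i j
    simp only [Matrix.mul_apply, Fin.sum_univ_two, Matrix.conjTranspose_apply,
      Matrix.smul_apply, Matrix.of_apply, smul_eq_mul]
    rw [hJdef, hCEdef] at *
    norm_num [Matrix.of_apply]
    ring
  -- helper rewriting lemmas
  have hP1' : ∀ (W : Matrix (Fin n) (Fin 2) ℂ), P * (P⁻¹ * W) = W := by
    intro W; exact Matrix.mul_nonsing_inv_cancel_left P W hPd
  have hP2' : ∀ (W : Matrix (Fin n) (Fin 2) ℂ), P⁻¹ * (P * W) = W := by
    intro W; exact Matrix.nonsing_inv_mul_cancel_left P W hPd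
  have hB1' : ∀ (W : Matrix (Fin n) (Fin 2) ℂ), Zb * (Zb⁻¹ * W) = W := by
    intro W; exact Matrix.mul_nonsing_inv_cancel_left Zb W hZbu
  have hA2' : ∀ (W : Matrix (Fin n) (Fin 2) ℂ), Za⁻¹ * (Za * W) = W := by
    intro W; exact Matrix.nonsing_inv_mul_cancel_left Za W hZau
  have hJW : ∀ (W : Matrix (Fin 2) (Fin 2) ℂ), J * (J * W) = W := by
    intro W; rw [← Matrix.mul_assoc]
    rw [show J * J = 1 from hJJ, Matrix.one_mul]
  have hJW' : ∀ (W : Matrix (Fin 2) (Fin n) ℂ), J * (J * W) = W := by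
    intro W; rw [← Matrix.mul_assoc]
    rw [show J * J = 1 from hJJ, Matrix.one_mul]
  have hKeyW : ∀ (W : Matrix (Fin n) (Fin 2) ℂ), CEᴴ * (J * (CE * W)) =
      Complex.I • (P * (X * W)) - Complex.I • (X * (P * W)) := by
    intro W
    calc CEᴴ * (J * (CE * W)) = (CEᴴ * J * CE) * W := by
          simp only [Matrix.mul_assoc, mul_assoc, Matrix.mul_assoc]
      _ = _ := by
          rw [hKey]
          simp only [Matrix.smul_mul, Matrix.sub_mul, smul_sub, mul_assoc, Matrix.mul_assoc]
  -- conjugate transpose of Θ ζ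
  have hθζ : Θ ζ = 1 - Complex.I • (CE * Zc⁻¹ * P⁻¹ * CEᴴ * J) := rfl
  have hG : (Θ ζ)ᴴ = 1 + Complex.I • (J * (CE * (P⁻¹ * (Zb⁻¹ * CEᴴ)))) := by
    rw [hθζ, Matrix.conjTranspose_sub, Matrix.conjTranspose_smul, Matrix.conjTranspose_one,
      Matrix.conjTranspose_mul, Matrix.conjTranspose_mul, Matrix.conjTranspose_mul,
      Matrix.conjTranspose_mul, hJH, hPinvH, hZcH, Matrix.conjTranspose_conjTranspose,
      Complex.star_def, Complex.conj_I, neg_smul, sub_neg_eq_add]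
  -- central resolvent identity
  have hmid : P⁻¹ * Zb - Za * P⁻¹ - (X * P⁻¹ - P⁻¹ * X) =
      ((starRingEnd ℂ) ζ - z) • P⁻¹ := by
    rw [hZadef, hZbdef]
    simp only [Matrix.mul_sub, Matrix.sub_mul, Matrix.mul_smul, Matrix.smul_mul,
      Matrix.mul_one, Matrix.one_mul, sub_smul]
    abel
  have hC : Za⁻¹ * (P⁻¹ * CEᴴ) - P⁻¹ * (Zb⁻¹ * CEᴴ) -
      (Za⁻¹ * (X * (P⁻¹ * (Zb⁻¹ * CEᴴ))) - Za⁻¹ * (P⁻¹ * (X * (Zb⁻¹ * CEᴴ)))) =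
      ((starRingEnd ℂ) ζ - z) • (Za⁻¹ * (P⁻¹ * (Zb⁻¹ * CEᴴ))) := by
    have e : Za⁻¹ * ((P⁻¹ * Zb - Za * P⁻¹ - (X * P⁻¹ - P⁻¹ * X)) * (Zb⁻¹ * CEᴴ)) =
        ((starRingEnd ℂ) ζ - z) • (Za⁻¹ * (P⁻¹ * (Zb⁻¹ * CEᴴ))) := by
      rw [hmid]
      simp only [Matrix.smul_mul, Matrix.mul_smul, mul_assoc, Matrix.mul_assoc]
    rw [← e]
    simp only [Matrix.sub_mul, Matrix.mul_sub, Matrix.mul_assoc, hB1', hA2']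
  have hC' : CE * (Za⁻¹ * (P⁻¹ * CEᴴ)) - CE * (P⁻¹ * (Zb⁻¹ * CEᴴ)) -
      (CE * (Za⁻¹ * (X * (P⁻¹ * (Zb⁻¹ * CEᴴ)))) -
        CE * (Za⁻¹ * (P⁻¹ * (X * (Zb⁻¹ * CEᴴ))))) =
      ((starRingEnd ℂ) ζ - z) • (CE * (Za⁻¹ * (P⁻¹ * (Zb⁻¹ * CEᴴ)))) := by
    have := congrArg (fun M => CE * M) hC
    simpa only [Matrix.mul_sub, Matrix.mul_smul] using this
  -- main expansion
  have hθz : Θ z = 1 - Complex.I • (CE * Za⁻¹ * P⁻¹ * CEᴴ * J) := rfl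
  rw [hθz, hG]
  simp only [Matrix.mul_add, Matrix.add_mul, Matrix.mul_sub, Matrix.sub_mul,
    Matrix.mul_one, Matrix.one_mul, Matrix.smul_mul, Matrix.mul_smul, smul_smul,
    Matrix.mul_assoc, hJW, hJW', hJJ, Matrix.mul_one, hKeyW, hP1', hP2', smul_sub,
    Complex.I_mul_I, neg_one_smul]
  linear_combination (norm := module) Complex.I • hC'
end

section
/- Under the setup of the previous identity (P invertible Hermitian, Lyapunov identity, Θ(z) = I₂ - i[C;E](zI-X)⁻¹P⁻¹[C* E*]J), the function Θ is J-unitary on the real line: for every real x ∉ {x_1,...,x_n}, Θ(x)·J·Θ(x)* = J. In particular, each Θ(x) is invertible with Θ(x)⁻¹ = J·Θ(x)*·J. -/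
open Matrix

theorem stmt_13 (n : ℕ) (P : Matrix (Fin n) (Fin n) ℂ) (hP : P.IsHermitian)
    (hPu : IsUnit P) (x : Fin n → ℝ) (hx : Function.Injective x)
    (E C : Fin n → ℂ) (hE : ∀ i, (E i).im = 0) (hC : ∀ i, (C i).im = 0)
    (hLyap : P * Matrix.diagonal (fun i => (x i : ℂ)) -
        Matrix.diagonal (fun i => (x i : ℂ)) * P =
      Matrix.of fun i j => star (E i) * C j - star (C i) * E j) :
    let X : Matrix (Fin n) (Fin n) ℂ := Matrix.diagonal fun i => (x i : ℂ)
    let CE : Matrix (Fin 2) (Fin n) ℂ := Matrix.of fun p i => if p = 0 then C i else E i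
    let J : Matrix (Fin 2) (Fin 2) ℂ := !![0, -Complex.I; Complex.I, 0]
    let Θ : ℂ → Matrix (Fin 2) (Fin 2) ℂ := fun u =>
      1 - Complex.I • (CE * (u • (1 : Matrix (Fin n) (Fin n) ℂ) - X)⁻¹ * P⁻¹ * CEᴴ * J)
    ∀ t : ℝ, (∀ i, (t : ℂ) ≠ (x i : ℂ)) →
      Θ (t : ℂ) * J * (Θ (t : ℂ))ᴴ = J ∧ IsUnit (Θ (t : ℂ)) ∧
        (Θ (t : ℂ))⁻¹ = J * (Θ (t : ℂ))ᴴ * J := by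
  intro X CE J Θ t ht
  -- abbreviations
  set R : Matrix (Fin n) (Fin n) ℂ := ((t : ℂ) • (1 : Matrix (Fin n) (Fin n) ℂ) - X)⁻¹ with hR
  set Q : Matrix (Fin n) (Fin n) ℂ := P⁻¹ with hQ
  set B : Matrix (Fin 2) (Fin 2) ℂ := CE * R * Q * CEᴴ with hB
  have hΘ : Θ (t : ℂ) = 1 - Complex.I • (B * J) := rfl
  -- facts about D := t•1 - X
  have hD : (t : ℂ) • (1 : Matrix (Fin n) (Fin n) ℂ) - X
      = Matrix.diagonal (fun i => (t : ℂ) - (x i : ℂ)) := by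
    have hXdef : X = Matrix.diagonal (fun i => (x i : ℂ)) := rfl
    rw [hXdef, Matrix.smul_one_eq_diagonal, Matrix.diagonal_sub]
  have hDdet : IsUnit ((t : ℂ) • (1 : Matrix (Fin n) (Fin n) ℂ) - X).det := by
    rw [hD, Matrix.det_diagonal, isUnit_iff_ne_zero]
    exact Finset.prod_ne_zero_iff.mpr fun i _ => sub_ne_zero.mpr (ht i)
  have hDR : ((t : ℂ) • (1 : Matrix (Fin n) (Fin n) ℂ) - X) * R = 1 :=
    Matrix.mul_nonsing_inv _ hDdet
  have hRD : R * ((t : ℂ) • (1 : Matrix (Fin n) (Fin n) ℂ) - X) = 1 :=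
    Matrix.nonsing_inv_mul _ hDdet
  have hDH : ((t : ℂ) • (1 : Matrix (Fin n) (Fin n) ℂ) - X)ᴴ
      = (t : ℂ) • (1 : Matrix (Fin n) (Fin n) ℂ) - X := by
    have hstar : (star fun i : Fin n => (t : ℂ) - (x i : ℂ))
        = fun i : Fin n => (t : ℂ) - (x i : ℂ) := by
      funext i
      simp [Complex.conj_ofReal]
    rw [hD, Matrix.diagonal_conjTranspose, hstar]
  have hRH : Rᴴ = R := by rw [hR, Matrix.conjTranspose_nonsing_inv, hDH]
  -- facts about P
  have hPdet : IsUnit P.det := (Matrix.isUnit_iff_isUnit_det P).mp hPu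
  have hPQ : P * Q = 1 := Matrix.mul_nonsing_inv _ hPdet
  have hQP : Q * P = 1 := Matrix.nonsing_inv_mul _ hPdet
  have hQH : Qᴴ = Q := hP.inv.eq
  -- facts about J
  have hJdef : J = !![0, -Complex.I; Complex.I, 0] := rfl
  have hJH : Jᴴ = J := by
    rw [hJdef]
    ext i j
    fin_cases i <;> fin_cases j <;>
      simp [Matrix.conjTranspose_apply, Complex.star_def]
  have hJJ : J * J = 1 := by
    rw [hJdef]
    ext i j
    fin_cases i <;> fin_cases j <;>
      simp [Matrix.mul_apply, Fin.sum_univ_two, Complex.I_mul_I]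
  -- the key Lyapunov consequence
  have hKey : CEᴴ * J * CE = Complex.I • (P * X - X * P) := by
    rw [show P * X - X * P =
        Matrix.of fun i j => star (E i) * C j - star (C i) * E j from hLyap]
    ext i j
    simp [Matrix.mul_apply, Fin.sum_univ_two, Matrix.conjTranspose_apply, CE, J]
    ring
  -- conjugate transpose of B
  have hBH : Bᴴ = CE * Q * R * CEᴴ := by
    rw [hB]
    simp only [Matrix.conjTranspose_mul, Matrix.conjTranspose_conjTranspose, hRH, hQH]
    simp only [Matrix.mul_assoc]
  -- conjugate transpose of Θ
  have hΘH : (Θ (t : ℂ))ᴴ = 1 + Complex.I • (J * Bᴴ) := by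
    rw [hΘ, Matrix.conjTranspose_sub, Matrix.conjTranspose_smul,
      Matrix.conjTranspose_one, Matrix.conjTranspose_mul, hJH]
    rw [Complex.star_def, Complex.conj_I, neg_smul, sub_neg_eq_add]
  -- the sandwich computations
  have sandQ : Q * (P * X - X * P) * Q = X * Q - Q * X := by
    rw [mul_sub, sub_mul, ← Matrix.mul_assoc Q P X, hQP, one_mul,
      Matrix.mul_assoc Q (X * P) Q, Matrix.mul_assoc X P Q, hPQ, mul_one]
  have hRX : R * X = (t : ℂ) • R - 1 := by
    have := hRD
    rw [mul_sub, Matrix.mul_smul, mul_one] at this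
    linear_combination (norm := module) -this
  have hXR : X * R = (t : ℂ) • R - 1 := by
    have := hDR
    rw [sub_mul, Matrix.smul_mul, one_mul] at this
    linear_combination (norm := module) -this
  have sandR : R * (X * Q - Q * X) * R = R * Q - Q * R := by
    have h1 : R * (X * Q) * R = ((t : ℂ) • R - 1) * (Q * R) := by
      rw [← Matrix.mul_assoc R X Q, hRX, Matrix.mul_assoc]
    have h2 : R * (Q * X) * R = R * Q * ((t : ℂ) • R - 1) := by
      rw [← Matrix.mul_assoc R Q X, Matrix.mul_assoc (R * Q) X R, hXR]
    rw [mul_sub, sub_mul, h1, h2]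
    simp only [sub_mul, mul_sub, Matrix.smul_mul, Matrix.mul_smul, one_mul,
      mul_one, Matrix.mul_assoc]
    abel
  -- the main claim: B * J * Bᴴ = I • (B - Bᴴ)
  have claim : B * J * Bᴴ = Complex.I • B - Complex.I • Bᴴ := by
    have e1 : B * J * Bᴴ = CE * R * Q * (CEᴴ * J * CE) * Q * R * CEᴴ := by
      rw [hB, hBH]; simp only [Matrix.mul_assoc]
    rw [e1, hKey]
    have e2 : CE * R * Q * (Complex.I • (P * X - X * P)) * Q * R * CEᴴ
        = Complex.I • (CE * (R * (Q * (P * X - X * P) * Q) * R) * CEᴴ) := by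
      simp only [Matrix.mul_smul, Matrix.smul_mul, Matrix.mul_assoc]
    rw [e2, sandQ, sandR, hB, hBH]
    rw [Matrix.mul_sub, Matrix.sub_mul, smul_sub]
    simp only [Matrix.mul_assoc]
  -- main identity
  have main : Θ (t : ℂ) * J * (Θ (t : ℂ))ᴴ = J := by
    have m1 : (1 - Complex.I • (B * J)) * J = J - Complex.I • B := by
      rw [Matrix.sub_mul, one_mul, Matrix.smul_mul, Matrix.mul_assoc, hJJ, mul_one]
    have m2 : J * (J * Bᴴ) = Bᴴ := by rw [← Matrix.mul_assoc, hJJ, one_mul]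
    have m3 : Complex.I • (Complex.I • B - Complex.I • Bᴴ) = Bᴴ - B := by
      rw [smul_sub, smul_smul, smul_smul, Complex.I_mul_I, neg_smul, neg_smul,
        one_smul, one_smul]
      abel
    rw [hΘ, hΘH, m1, Matrix.mul_add, mul_one, Matrix.mul_smul, Matrix.sub_mul,
      m2, Matrix.smul_mul, ← Matrix.mul_assoc B J Bᴴ, claim, m3, sub_sub_cancel]
    abel
  have h1 : Θ (t : ℂ) * (J * (Θ (t : ℂ))ᴴ * J) = 1 := by
    rw [← Matrix.mul_assoc, ← Matrix.mul_assoc, main, hJJ]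
  exact ⟨main, ⟨⟨Θ (t : ℂ), J * (Θ (t : ℂ))ᴴ * J, h1, mul_eq_one_comm.mp h1⟩, rfl⟩,
    Matrix.inv_eq_right_inv h1⟩
end

section
/- Let P be an invertible Hermitian n×n matrix with block decompositions P = [[P₁₁, P₁₂],[P₂₁, P₂₂]] and P⁻¹ = [[P̃₁₁, P̃₁₂],[P̃₂₁, P̃₂₂]], conformal with P₂₂, P̃₂₂ of size k×k. If P̃₂₂ is negative semidefinite, then the number of negative eigenvalues of P₁₁ equals (number of negative eigenvalues of P) minus k. -/
/-!
Write `n₋(M)` for the number of negative eigenvalues of a Hermitian matrix `M`; by Sylvester's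
inertia argument (comparing with spans of eigenvectors) it bounds the dimension of every subspace
on which the form `x ↦ x* M x` is negative definite, and, when `M` is invertible, of every
subspace on which it is negative semidefinite. On vectors supported on the first block the form
of `P` is the form of `P₁₁`.

`n₋(P) ≤ n₋(P₁₁) + k`: the vectors of the negative eigenspace of `P` that vanish on the last `k`
coordinates form a `P₁₁`-negative definite subspace of codimension at most `k` in it.

`n₋(P₁₁) + k ≤ n₋(P)`: embed the negative eigenspace of `P₁₁` into the first block and add
`P⁻¹ (0 ⊕ ℂᵏ)`. The two pieces are `P`-orthogonal because `P P⁻¹ (0 ⊕ w) = 0 ⊕ w`, and on the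
second one the form of `P` is `w* P̃₂₂ w ≤ 0`. Their sum is a `P`-negative semidefinite subspace
of dimension `n₋(P₁₁) + k`.
-/

open scoped ComplexOrder
open Matrix

namespace Pi

section ExtendByZero

variable {R α β : Type*} [Semiring R]

def extendInl : (α → R) →ₗ[R] (α ⊕ β → R) :=
  (LinearEquiv.sumArrowLequivProdArrow α β R R).symm.toLinearMap ∘ₗ LinearMap.inl R _ _

def extendInr : (β → R) →ₗ[R] (α ⊕ β → R) :=
  (LinearEquiv.sumArrowLequivProdArrow α β R R).symm.toLinearMap ∘ₗ LinearMap.inr R _ _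

@[simp]
theorem extendInl_apply (v : α → R) : extendInl (β := β) v = Sum.elim v 0 := rfl

@[simp]
theorem extendInr_apply (w : β → R) : extendInr (α := α) w = Sum.elim (0 : α → R) w := rfl

theorem extendInl_injective : Function.Injective (extendInl (R := R) (α := α) (β := β)) :=
  fun _ _ h => funext fun i => congrFun h (Sum.inl i)

theorem extendInr_injective : Function.Injective (extendInr (R := R) (α := α) (β := β)) :=
  fun _ _ h => funext fun i => congrFun h (Sum.inr i)

variable [Fintype α] [Fintype β] [StarRing R]

theorem star_extendInl_dotProduct_mulVec_extendInl (M : Matrix (α ⊕ β) (α ⊕ β) R)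
    (v : α → R) :
    star (extendInl v) ⬝ᵥ (M *ᵥ extendInl v) = star v ⬝ᵥ (M.toBlocks₁₁ *ᵥ v) := by
  rw [← fromBlocks_toBlocks M]
  simp [fromBlocks_mulVec, Function.star_sumElim, sumElim_dotProduct_sumElim]

theorem star_extendInr_dotProduct_mulVec_extendInr (M : Matrix (α ⊕ β) (α ⊕ β) R)
    (w : β → R) :
    star (extendInr w) ⬝ᵥ (M *ᵥ extendInr w) = star w ⬝ᵥ (M.toBlocks₂₂ *ᵥ w) := by
  rw [← fromBlocks_toBlocks M]
  simp [fromBlocks_mulVec, Function.star_sumElim, sumElim_dotProduct_sumElim]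

theorem star_extendInl_dotProduct_extendInr (v : α → R) (w : β → R) :
    star (extendInl v) ⬝ᵥ extendInr w = 0 := by
  simp [Function.star_sumElim, sumElim_dotProduct_sumElim]

end ExtendByZero

section WeightedNormSq

variable {𝕜 ι : Type*} [RCLike 𝕜] [Fintype ι] {s : Set ι} {w : ι → ℝ} {y : ι → 𝕜}

theorem mul_norm_sq_nonneg_of_mem_spanSubset (hw : ∀ i ∈ s, 0 ≤ w i)
    (hy : y ∈ Pi.spanSubset 𝕜 s) (i : ι) : 0 ≤ w i * ‖y i‖ ^ 2 := by
  by_cases hi : i ∈ s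
  · exact mul_nonneg (hw i hi) (sq_nonneg _)
  · simp [Pi.mem_spanSubset_iff.mp hy i hi]

theorem sum_mul_norm_sq_nonneg_of_mem_spanSubset (hw : ∀ i ∈ s, 0 ≤ w i)
    (hy : y ∈ Pi.spanSubset 𝕜 s) : 0 ≤ ∑ i, w i * ‖y i‖ ^ 2 :=
  Finset.sum_nonneg fun i _ => mul_norm_sq_nonneg_of_mem_spanSubset hw hy i

theorem sum_mul_norm_sq_pos_of_mem_spanSubset (hw : ∀ i ∈ s, 0 < w i)
    (hy : y ∈ Pi.spanSubset 𝕜 s) (hy0 : y ≠ 0) : 0 < ∑ i, w i * ‖y i‖ ^ 2 := by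
  obtain ⟨j, hj⟩ := Function.ne_iff.mp hy0
  have hjs : j ∈ s := by
    by_contra hjs
    exact hj (Pi.mem_spanSubset_iff.mp hy j hjs)
  exact Finset.sum_pos'
    (fun i _ => mul_norm_sq_nonneg_of_mem_spanSubset (fun i hi => (hw i hi).le) hy i)
    ⟨j, Finset.mem_univ _, mul_pos (hw j hjs) (by positivity)⟩

end WeightedNormSq

end Pi

theorem Submodule.finrank_add_finrank_le_finrank_comap_add {K E F : Type*} [DivisionRing K]
    [AddCommGroup E] [Module K E] [AddCommGroup F] [Module K F] [FiniteDimensional K F]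
    {f : E →ₗ[K] F} (hf : Function.Injective f) (U : Submodule K F) :
    Module.finrank K U + Module.finrank K E ≤
      Module.finrank K (U.comap f) + Module.finrank K F := by
  have hinf : Module.finrank K ↥(U ⊓ LinearMap.range f) = Module.finrank K (U.comap f) := by
    rw [inf_comm, ← Submodule.map_comap_eq]
    exact (Submodule.equivMapOfInjective f hf _).finrank_eq.symm
  rw [← LinearMap.finrank_range_of_inj hf, ← hinf, ← Submodule.finrank_sup_add_finrank_inf_eq]
  linarith [Submodule.finrank_le (U ⊔ LinearMap.range f)]

namespace Matrix

variable {𝕜 ι : Type*} [RCLike 𝕜] [Fintype ι] {A : Matrix ι ι 𝕜}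

theorem IsHermitian.re_dotProduct_mulVec_add (hA : A.IsHermitian) {x y : ι → 𝕜}
    (hxy : star x ⬝ᵥ (A *ᵥ y) = 0) :
    RCLike.re (star (x + y) ⬝ᵥ (A *ᵥ (x + y))) =
      RCLike.re (star x ⬝ᵥ (A *ᵥ x)) + RCLike.re (star y ⬝ᵥ (A *ᵥ y)) := by
  have hyx : star y ⬝ᵥ (A *ᵥ x) = 0 := by
    rw [star_dotProduct, star_mulVec, ← dotProduct_mulVec, hA.eq, hxy, star_zero]
  simp only [star_add, mulVec_add, dotProduct_add, add_dotProduct, hxy, hyx, map_add]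
  simp

namespace IsHermitian

variable [DecidableEq ι] (hA : A.IsHermitian)

theorem eigenvalues_ne_zero_of_isUnit (hAu : IsUnit A) (i : ι) : hA.eigenvalues i ≠ 0 := by
  have hdet := ((isUnit_iff_isUnit_det A).mp hAu).ne_zero
  rw [hA.det_eq_prod_eigenvalues, Finset.prod_ne_zero_iff] at hdet
  exact_mod_cast hdet i (Finset.mem_univ i)

theorem re_dotProduct_mulVec_eigenvectorUnitary_mulVec (y : ι → 𝕜) :
    RCLike.re (star ((hA.eigenvectorUnitary : Matrix ι ι 𝕜) *ᵥ y) ⬝ᵥ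
      (A *ᵥ ((hA.eigenvectorUnitary : Matrix ι ι 𝕜) *ᵥ y))) =
      ∑ i, hA.eigenvalues i * ‖y i‖ ^ 2 := by
  set U : Matrix ι ι 𝕜 := (hA.eigenvectorUnitary : Matrix ι ι 𝕜)
  have hAU : A * U = U * diagonal (RCLike.ofReal ∘ hA.eigenvalues) := by
    conv_lhs => rw [hA.spectral_theorem]
    simp [U, Unitary.conjStarAlgAut_apply, Matrix.mul_assoc]
  have hU : star U * U = 1 := Unitary.coe_star_mul_self hA.eigenvectorUnitary
  rw [mulVec_mulVec, hAU, ← mulVec_mulVec, star_mulVec, ← dotProduct_mulVec, mulVec_mulVec,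
    ← star_eq_conjTranspose, hU, one_mulVec]
  simp only [dotProduct, mulVec_diagonal, map_sum]
  refine Finset.sum_congr rfl fun i _ => ?_
  rw [Function.comp_apply, Pi.star_apply, RCLike.star_def, mul_left_comm, RCLike.conj_mul]
  norm_cast

noncomputable def eigenvectorSpan (s : Set ι) : Submodule 𝕜 (ι → 𝕜) :=
  (Pi.spanSubset 𝕜 s).map (UnitaryGroup.toLinearEquiv hA.eigenvectorUnitary).toLinearMap

theorem mem_eigenvectorSpan {s : Set ι} {x : ι → 𝕜} :
    x ∈ hA.eigenvectorSpan s ↔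
      ∃ y ∈ Pi.spanSubset 𝕜 s, (hA.eigenvectorUnitary : Matrix ι ι 𝕜) *ᵥ y = x :=
  Iff.rfl

theorem finrank_eigenvectorSpan (s : Set ι) :
    Module.finrank 𝕜 (hA.eigenvectorSpan s) = s.ncard :=
  (LinearEquiv.finrank_map_eq _ _).trans Pi.dim_spanSubset

theorem re_dotProduct_mulVec_nonneg_of_mem_eigenvectorSpan {s : Set ι}
    (hs : ∀ i ∈ s, 0 ≤ hA.eigenvalues i) {x : ι → 𝕜} (hx : x ∈ hA.eigenvectorSpan s) :
    0 ≤ RCLike.re (star x ⬝ᵥ (A *ᵥ x)) := by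
  obtain ⟨y, hy, rfl⟩ := hA.mem_eigenvectorSpan.mp hx
  rw [re_dotProduct_mulVec_eigenvectorUnitary_mulVec]
  exact Pi.sum_mul_norm_sq_nonneg_of_mem_spanSubset hs hy

theorem re_dotProduct_mulVec_pos_of_mem_eigenvectorSpan {s : Set ι}
    (hs : ∀ i ∈ s, 0 < hA.eigenvalues i) {x : ι → 𝕜} (hx : x ∈ hA.eigenvectorSpan s)
    (hx0 : x ≠ 0) : 0 < RCLike.re (star x ⬝ᵥ (A *ᵥ x)) := by
  obtain ⟨y, hy, rfl⟩ := hA.mem_eigenvectorSpan.mp hx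
  rw [re_dotProduct_mulVec_eigenvectorUnitary_mulVec]
  exact Pi.sum_mul_norm_sq_pos_of_mem_spanSubset hs hy (by rintro rfl; simp at hx0)

theorem re_dotProduct_mulVec_neg_of_mem_eigenvectorSpan {s : Set ι}
    (hs : ∀ i ∈ s, hA.eigenvalues i < 0) {x : ι → 𝕜} (hx : x ∈ hA.eigenvectorSpan s)
    (hx0 : x ≠ 0) : RCLike.re (star x ⬝ᵥ (A *ᵥ x)) < 0 := by
  obtain ⟨y, hy, rfl⟩ := hA.mem_eigenvectorSpan.mp hx
  rw [re_dotProduct_mulVec_eigenvectorUnitary_mulVec, ← neg_pos, ← Finset.sum_neg_distrib]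
  simp_rw [← neg_mul]
  exact Pi.sum_mul_norm_sq_pos_of_mem_spanSubset (fun i hi => neg_pos.mpr (hs i hi)) hy
    (by rintro rfl; simp at hx0)

theorem finrank_le_ncard_compl_of_disjoint {V : Submodule 𝕜 (ι → 𝕜)} {s : Set ι}
    (h : Disjoint V (hA.eigenvectorSpan s)) : Module.finrank 𝕜 V ≤ sᶜ.ncard := by
  have := Submodule.finrank_add_finrank_le_of_disjoint h
  rw [finrank_eigenvectorSpan, Module.finrank_fintype_fun_eq_card, ← Nat.card_eq_fintype_card,
    ← Set.ncard_add_ncard_compl s] at this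
  omega

theorem finrank_le_ncard_neg_of_neg {V : Submodule 𝕜 (ι → 𝕜)}
    (hV : ∀ x ∈ V, x ≠ 0 → RCLike.re (star x ⬝ᵥ (A *ᵥ x)) < 0) :
    Module.finrank 𝕜 V ≤ {i | hA.eigenvalues i < 0}.ncard := by
  have hdisj : Disjoint V (hA.eigenvectorSpan {i | 0 ≤ hA.eigenvalues i}) := by
    refine Submodule.disjoint_def.mpr fun x hxV hxS => ?_
    by_contra hx0
    exact (hV x hxV hx0).not_ge
      (hA.re_dotProduct_mulVec_nonneg_of_mem_eigenvectorSpan (fun _ hi => hi) hxS)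
  simpa [Set.compl_ofPred] using hA.finrank_le_ncard_compl_of_disjoint hdisj

theorem finrank_le_ncard_neg_of_nonpos (h0 : ∀ i, hA.eigenvalues i ≠ 0)
    {V : Submodule 𝕜 (ι → 𝕜)} (hV : ∀ x ∈ V, RCLike.re (star x ⬝ᵥ (A *ᵥ x)) ≤ 0) :
    Module.finrank 𝕜 V ≤ {i | hA.eigenvalues i < 0}.ncard := by
  have hdisj : Disjoint V (hA.eigenvectorSpan {i | 0 < hA.eigenvalues i}) := by
    refine Submodule.disjoint_def.mpr fun x hxV hxS => ?_
    by_contra hx0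
    exact (hV x hxV).not_gt
      (hA.re_dotProduct_mulVec_pos_of_mem_eigenvectorSpan (fun _ hi => hi) hxS hx0)
  convert hA.finrank_le_ncard_compl_of_disjoint hdisj using 3
  ext i
  simp only [Set.mem_ofPred_eq, Set.mem_compl_iff, not_lt]
  exact ⟨le_of_lt, fun h => h.lt_of_ne (h0 i)⟩

theorem finrank_add_finrank_le_ncard_neg (h0 : ∀ i, hA.eigenvalues i ≠ 0)
    {V W : Submodule 𝕜 (ι → 𝕜)}
    (hV : ∀ x ∈ V, x ≠ 0 → RCLike.re (star x ⬝ᵥ (A *ᵥ x)) < 0)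
    (hW : ∀ y ∈ W, RCLike.re (star y ⬝ᵥ (A *ᵥ y)) ≤ 0)
    (hVW : ∀ x ∈ V, ∀ y ∈ W, star x ⬝ᵥ (A *ᵥ y) = 0) :
    Module.finrank 𝕜 V + Module.finrank 𝕜 W ≤ {i | hA.eigenvalues i < 0}.ncard := by
  have hdisj : V ⊓ W = ⊥ := by
    refine (Submodule.eq_bot_iff _).mpr fun x ⟨hxV, hxW⟩ => ?_
    by_contra hx0
    have := hV x hxV hx0
    rw [hVW x hxV x hxW, map_zero] at this
    exact this.false
  have hsup : ∀ z ∈ V ⊔ W, RCLike.re (star z ⬝ᵥ (A *ᵥ z)) ≤ 0 := by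
    intro z hz
    obtain ⟨x, hxV, y, hyW, rfl⟩ := Submodule.mem_sup.mp hz
    rw [hA.re_dotProduct_mulVec_add (hVW x hxV y hyW)]
    by_cases hx0 : x = 0
    · simpa [hx0] using hW y hyW
    · exact add_nonpos (hV x hxV hx0).le (hW y hyW)
  rw [← Submodule.finrank_sup_add_finrank_inf_eq, hdisj, finrank_bot, add_zero]
  exact hA.finrank_le_ncard_neg_of_nonpos h0 hsup

variable {α β : Type*} [Fintype α] [Fintype β] [DecidableEq α] [DecidableEq β]
  {P : Matrix (α ⊕ β) (α ⊕ β) 𝕜}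

theorem ncard_neg_le_ncard_neg_toBlocks₁₁_add (hP : P.IsHermitian)
    (h11 : P.toBlocks₁₁.IsHermitian) :
    {i | hP.eigenvalues i < 0}.ncard ≤ {i | h11.eigenvalues i < 0}.ncard + Fintype.card β := by
  set N := hP.eigenvectorSpan {i | hP.eigenvalues i < 0}
  have hN : ∀ v ∈ N.comap Pi.extendInl, v ≠ 0 →
      RCLike.re (star v ⬝ᵥ (P.toBlocks₁₁ *ᵥ v)) < 0 := by
    intro v hv hv0
    rw [← Pi.star_extendInl_dotProduct_mulVec_extendInl]
    exact hP.re_dotProduct_mulVec_neg_of_mem_eigenvectorSpan (fun _ hi => hi) hv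
      ((map_ne_zero_iff _ Pi.extendInl_injective).mpr hv0)
  have hcodim := Submodule.finrank_add_finrank_le_finrank_comap_add Pi.extendInl_injective N
  rw [hP.finrank_eigenvectorSpan, Module.finrank_fintype_fun_eq_card,
    Module.finrank_fintype_fun_eq_card, Fintype.card_sum] at hcodim
  have := h11.finrank_le_ncard_neg_of_neg hN
  omega

theorem ncard_neg_toBlocks₁₁_add_le (hP : P.IsHermitian) (hPu : IsUnit P)
    (h11 : P.toBlocks₁₁.IsHermitian)
    (h22 : ∀ w, RCLike.re (star w ⬝ᵥ ((P⁻¹).toBlocks₂₂ *ᵥ w)) ≤ 0) :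
    {i | h11.eigenvalues i < 0}.ncard + Fintype.card β ≤ {i | hP.eigenvalues i < 0}.ncard := by
  have hPP : P * P⁻¹ = 1 := mul_nonsing_inv P ((isUnit_iff_isUnit_det P).mp hPu)
  set V := (h11.eigenvectorSpan {i | h11.eigenvalues i < 0}).map (Pi.extendInl (β := β))
  set L := (P⁻¹).mulVecLin ∘ₗ Pi.extendInr (α := α)
  have hL (w : β → 𝕜) : P *ᵥ L w = Pi.extendInr w := by
    simp only [L, LinearMap.comp_apply, mulVecLin_apply, mulVec_mulVec, hPP, one_mulVec]
  have hLinj : Function.Injective L :=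
    fun w w' h => Pi.extendInr_injective (by rw [← hL, ← hL, h])
  have hV : Module.finrank 𝕜 V = {i | h11.eigenvalues i < 0}.ncard :=
    (Submodule.equivMapOfInjective _ Pi.extendInl_injective _).finrank_eq.symm.trans
      (h11.finrank_eigenvectorSpan _)
  have hW : Module.finrank 𝕜 (LinearMap.range L) = Fintype.card β :=
    (LinearMap.finrank_range_of_inj hLinj).trans (Module.finrank_fintype_fun_eq_card 𝕜)
  rw [← hV, ← hW]
  refine hP.finrank_add_finrank_le_ncard_neg (hP.eigenvalues_ne_zero_of_isUnit hPu) ?_ ?_ ?_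
  · rintro _ ⟨v, hv, rfl⟩ hv0
    rw [Pi.star_extendInl_dotProduct_mulVec_extendInl]
    exact h11.re_dotProduct_mulVec_neg_of_mem_eigenvectorSpan (fun _ hi => hi) hv
      (by rintro rfl; simp at hv0)
  · rintro _ ⟨w, rfl⟩
    rw [hL, star_dotProduct, RCLike.star_def, RCLike.conj_re, LinearMap.comp_apply,
      mulVecLin_apply, Pi.star_extendInr_dotProduct_mulVec_extendInr]
    exact h22 w
  · rintro _ ⟨v, -, rfl⟩ _ ⟨w, rfl⟩
    rw [hL, Pi.star_extendInl_dotProduct_extendInr]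

end IsHermitian

end Matrix

theorem stmt_16 (p k : ℕ) (P : Matrix (Fin p ⊕ Fin k) (Fin p ⊕ Fin k) ℂ)
    (hP : P.IsHermitian) (hPu : IsUnit P)
    (hneg : (-(P⁻¹).toBlocks₂₂).PosSemidef) :
    ∀ h11 : (P.toBlocks₁₁).IsHermitian,
      Fintype.card {i // h11.eigenvalues i < 0} =
        Fintype.card {i // hP.eigenvalues i < 0} - k := by
  intro h11
  have h22 (w : Fin k → ℂ) : RCLike.re (star w ⬝ᵥ ((P⁻¹).toBlocks₂₂ *ᵥ w)) ≤ 0 := by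
    simpa [neg_mulVec, dotProduct_neg] using hneg.re_dotProduct_nonneg w
  have hle := hP.ncard_neg_le_ncard_neg_toBlocks₁₁_add h11
  have hge := hP.ncard_neg_toBlocks₁₁_add_le hPu h11 h22
  simp only [← Nat.card_coe_set_eq, Set.coe_ofPred, Nat.card_eq_fintype_card,
    Fintype.card_fin] at hle hge
  omega
end
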